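/- Let ρ = Σ_{p=1}^{s} w^p · (ρ_{A,p} ⊗ ρ_{B,p}) be a separable two-qubit state, i.e. w^p ≥ 0 with Σ_{p=1}^{s} w^p = 1 and each ρ_{A,p}, ρ_{B,p} a 2×2 density matrix. Then the reduced densities are more mixed in trace-square norm than ρ itself: tr((tr_B ρ)²) ≥ tr(ρ²) and tr((tr_A ρ)²) ≥ tr(ρ²). -/

import Mathlib

open Matrix Kronecker ComplexOrder

/-- Partial trace over the second qubit. -/
noncomputable def trB (ρ : Matrix (Fin 2 × Fin 2) (Fin 2 × Fin 2) ℂ) :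
    Matrix (Fin 2) (Fin 2) ℂ :=
  Matrix.of fun a b => ∑ c : Fin 2, ρ (a, c) (b, c)

/-- Partial trace over the first qubit. -/
noncomputable def trA (ρ : Matrix (Fin 2 × Fin 2) (Fin 2 × Fin 2) ℂ) :
    Matrix (Fin 2) (Fin 2) ℂ :=
  Matrix.of fun c d => ∑ a : Fin 2, ρ (a, c) (a, d)

/-!
For `ρ = ∑ₚ wₚ • (Aₚ ⊗ Bₚ)` both purities expand as double sums over pairs of product terms:
`tr ρ² = ∑ₚ,q wₚ w_q tr(Aₚ A_q) tr(Bₚ B_q)` and, since `tr Bₚ = 1`,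
`tr (tr_B ρ)² = ∑ₚ,q wₚ w_q tr(Aₚ A_q)`. The two sums compare term by term because
`0 ≤ tr(X Y) ≤ tr X · tr Y` for positive semidefinite `X`, `Y`: write `X = Sᴴ S`, so that
`tr(X Y) = tr(S Y Sᴴ) ≥ 0`, and apply this to `tr Y • 1 - Y`, which is positive semidefinite
because no eigenvalue of `Y` exceeds their sum.
-/

namespace Matrix

section TraceInequalities

open scoped MatrixOrder

variable {n 𝕜 : Type*} [Fintype n] [RCLike 𝕜] {X Y : Matrix n n 𝕜}

theorem PosSemidef.trace_mul_nonneg (hX : X.PosSemidef) (hY : Y.PosSemidef) :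
    0 ≤ (X * Y).trace := by
  classical
  obtain ⟨S, rfl⟩ : ∃ S : Matrix n n 𝕜, X = Sᴴ * S :=
    ⟨CFC.sqrt X, by
      rw [← star_eq_conjTranspose, (CFC.sqrt_nonneg X).star_eq,
        CFC.sqrt_mul_sqrt_self X hX.nonneg]⟩
  rw [Matrix.mul_assoc, trace_mul_comm]
  exact (hY.mul_mul_conjTranspose_same S).trace_nonneg

variable [DecidableEq n]

theorem PosSemidef.posSemidef_trace_smul_one_sub (hY : Y.PosSemidef) :
    (Y.trace • 1 - Y).PosSemidef := by
  obtain ⟨t, -, ht⟩ := RCLike.nonneg_iff_exists_ofReal.mp hY.trace_nonneg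
  have ht_sum : t = ∑ i, hY.isHermitian.eigenvalues i :=
    RCLike.ofReal_injective (K := 𝕜) <| by
      rw [ht, hY.isHermitian.trace_eq_sum_eigenvalues, RCLike.ofReal_sum]
  have hle : Y ≤ algebraMap ℝ (Matrix n n 𝕜) t := by
    rw [le_algebraMap_iff_spectrum_le hY.isHermitian,
      hY.isHermitian.spectrum_real_eq_range_eigenvalues, ht_sum]
    rintro _ ⟨i, rfl⟩
    exact Finset.single_le_sum (fun j _ => hY.eigenvalues_nonneg j) (Finset.mem_univ i)
  rwa [Algebra.algebraMap_eq_smul_one, RCLike.real_smul_eq_coe_smul (K := 𝕜), ht] at hle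

theorem PosSemidef.trace_mul_le_trace_mul_trace (hX : X.PosSemidef) (hY : Y.PosSemidef) :
    (X * Y).trace ≤ X.trace * Y.trace := by
  have h := hX.trace_mul_nonneg hY.posSemidef_trace_smul_one_sub
  rwa [Matrix.mul_sub, trace_sub, Matrix.mul_smul, Matrix.mul_one, trace_smul, smul_eq_mul,
    mul_comm, sub_nonneg] at h

end TraceInequalities

theorem trace_sum_smul_mul_sum_smul {ι n R : Type*} [Fintype ι] [Fintype n] [CommSemiring R]
    (c : ι → R) (M : ι → Matrix n n R) :
    ((∑ p, c p • M p) * ∑ q, c q • M q).trace = ∑ p, ∑ q, c p * c q * (M p * M q).trace := by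
  simp only [Finset.sum_mul_sum, trace_sum, smul_mul_smul_comm, trace_smul, smul_eq_mul]

theorem sum_sum_mul_trace_mul_trace_le {ι m n 𝕜 : Type*} [Fintype ι] [Fintype m] [Fintype n]
    [DecidableEq n] [RCLike 𝕜] (c : ι → 𝕜) (hc : ∀ p, 0 ≤ c p)
    (A : ι → Matrix m m 𝕜) (B : ι → Matrix n n 𝕜) (hA : ∀ p, (A p).PosSemidef)
    (hB : ∀ p, (B p).PosSemidef) (hB1 : ∀ p, (B p).trace = 1) :
    ∑ p, ∑ q, c p * c q * ((A p * A q).trace * (B p * B q).trace) ≤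
      ∑ p, ∑ q, c p * c q * (A p * A q).trace := by
  refine Finset.sum_le_sum fun p _ => Finset.sum_le_sum fun q _ => ?_
  have hBB : (B p * B q).trace ≤ 1 := by
    simpa [hB1] using (hB p).trace_mul_le_trace_mul_trace (hB q)
  rw [← mul_assoc]
  exact mul_le_of_le_one_right
    (mul_nonneg (mul_nonneg (hc p) (hc q)) ((hA p).trace_mul_nonneg (hA q))) hBB

end Matrix

section PartialTrace

variable {ι : Type*} [Fintype ι] (c : ι → ℂ) (A B : ι → Matrix (Fin 2) (Fin 2) ℂ)

theorem trB_sum_smul_kronecker :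
    trB (∑ p, c p • (A p ⊗ₖ B p)) = ∑ p, (c p * (B p).trace) • A p := by
  ext a b
  simp only [trB, of_apply, Matrix.sum_apply, Fin.sum_univ_two, Matrix.smul_apply,
    kroneckerMap_apply, trace, diag_apply, smul_eq_mul, ← Finset.sum_add_distrib]
  exact Finset.sum_congr rfl fun p _ => by ring

theorem trA_sum_smul_kronecker :
    trA (∑ p, c p • (A p ⊗ₖ B p)) = ∑ p, (c p * (A p).trace) • B p := by
  ext a b
  simp only [trA, of_apply, Matrix.sum_apply, Fin.sum_univ_two, Matrix.smul_apply,
    kroneckerMap_apply, trace, diag_apply, smul_eq_mul, ← Finset.sum_add_distrib]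
  exact Finset.sum_congr rfl fun p _ => by ring

end PartialTrace

theorem stmt_7 (s : ℕ) (w : Fin s → ℝ) (ρA ρB : Fin s → Matrix (Fin 2) (Fin 2) ℂ)
    (hw : ∀ p, 0 ≤ w p)
    (hA : ∀ p, (ρA p).IsHermitian ∧ (ρA p).PosSemidef ∧ (ρA p).trace = 1)
    (hB : ∀ p, (ρB p).IsHermitian ∧ (ρB p).PosSemidef ∧ (ρB p).trace = 1)
    (ρ : Matrix (Fin 2 × Fin 2) (Fin 2 × Fin 2) ℂ)
    (hρ : ρ = ∑ p : Fin s, (w p : ℂ) • (ρA p ⊗ₖ ρB p)) :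
    (ρ * ρ).trace.re ≤ ((trB ρ) * (trB ρ)).trace.re ∧
    (ρ * ρ).trace.re ≤ ((trA ρ) * (trA ρ)).trace.re := by
  have hw' : ∀ p, 0 ≤ (w p : ℂ) := fun p => Complex.zero_le_real.mpr (hw p)
  have hρρ : (ρ * ρ).trace = ∑ p, ∑ q,
      (w p : ℂ) * w q * ((ρA p * ρA q).trace * (ρB p * ρB q).trace) := by
    simp only [hρ, trace_sum_smul_mul_sum_smul, ← mul_kronecker_mul, trace_kronecker]
  have htrB : trB ρ = ∑ p, (w p : ℂ) • ρA p := by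
    rw [hρ, trB_sum_smul_kronecker]
    simp [(hB _).2.2]
  have htrA : trA ρ = ∑ p, (w p : ℂ) • ρB p := by
    rw [hρ, trA_sum_smul_kronecker]
    simp [(hA _).2.2]
  constructor
  · rw [hρρ, htrB, trace_sum_smul_mul_sum_smul]
    exact (Complex.le_def.mp (sum_sum_mul_trace_mul_trace_le _ hw' ρA ρB
      (fun p => (hA p).2.1) (fun p => (hB p).2.1) (fun p => (hB p).2.2))).1
  · rw [hρρ, htrA, trace_sum_smul_mul_sum_smul]
    simp_rw [mul_comm (trace (ρA _ * ρA _))]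
    exact (Complex.le_def.mp (sum_sum_mul_trace_mul_trace_le _ hw' ρB ρA
      (fun p => (hB p).2.1) (fun p => (hA p).2.1) (fun p => (hA p).2.2))).1
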